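/- arXiv:2312.11706 — 2 statements merged into one kernel-verified Lean document; each statement's English description precedes it below -/
import Mathlib

section
/- For all integers k ≥ 3, a(L_k + 1) = F_{k+1} + 1. -/
/-- The sequence A105774: `a n = n` for `n ≤ 1`, and
`a n = fib (j+1) - a (n - fib j)` where `j ≥ 2` is the unique index
with `fib j < n ≤ fib (j+1)` (realized as the greatest `j ≤ n` with `fib j < n`). -/
def a (n : ℕ) : ℕ :=
  if _h : n ≤ 1 then n
  else
    Nat.fib (Nat.findGreatest (fun j => Nat.fib j < n) n + 1) -
      a (n - Nat.fib (Nat.findGreatest (fun j => Nat.fib j < n) n))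
decreasing_by
  have h2 : 2 ≤ n := by omega
  have hj : 2 ≤ Nat.findGreatest (fun j => Nat.fib j < n) n :=
    Nat.le_findGreatest h2 (by show Nat.fib 2 < n; simp [Nat.fib_two]; omega)
  have hpos : 0 < Nat.fib (Nat.findGreatest (fun j => Nat.fib j < n) n) :=
    Nat.fib_pos.mpr (by omega)
  omega

/-- The Lucas numbers: L₀ = 2, L₁ = 1, L_{n+2} = L_{n+1} + L_n. -/
def lucas : ℕ → ℕ
  | 0 => 2
  | 1 => 1
  | n + 2 => lucas (n + 1) + lucas n

/-! Reading `a` at `L_{j+1} + 1`, which lies in `(F_{j+2}, F_{j+3}]`, the recursion reflects it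
to `F_j + 1`, the left end of `(F_j, F_{j+1}]`; there one more step lands on `a 1 = 1`. So
`a (L_{j+1} + 1) = F_{j+3} - (F_{j+1} - 1) = F_{j+2} + 1`. -/

theorem lucas_succ_eq_fib_add_fib : ∀ k, lucas (k + 1) = Nat.fib (k + 2) + Nat.fib k
  | 0 => rfl
  | 1 => rfl
  | k + 2 => by
    rw [lucas, lucas_succ_eq_fib_add_fib (k + 1), lucas_succ_eq_fib_add_fib k,
      Nat.fib_add_two (n := k + 2), Nat.fib_add_two (n := k)]
    ring

theorem findGreatest_fib_lt_eq {j n : ℕ} (hj : Nat.fib j < n) (hn : n ≤ Nat.fib (j + 1)) :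
    Nat.findGreatest (fun i => Nat.fib i < n) n = j := by
  refine Nat.findGreatest_eq_iff.mpr ⟨?_, fun _ => hj, fun m hm _ hm' => ?_⟩
  · have := Nat.le_fib_add_one j
    omega
  · have := Nat.fib_mono (show j + 1 ≤ m from hm)
    omega

theorem a_one : a 1 = 1 := by
  rw [a]
  rfl

theorem a_eq_of_fib_lt_of_le {j n : ℕ} (hn : 2 ≤ n) (hj : Nat.fib j < n)
    (hjn : n ≤ Nat.fib (j + 1)) : a n = Nat.fib (j + 1) - a (n - Nat.fib j) := by
  rw [a, dif_neg (by omega), findGreatest_fib_lt_eq hj hjn]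

theorem a_fib_add_one {j : ℕ} (hj : 2 ≤ j) : a (Nat.fib j + 1) = Nat.fib (j + 1) - 1 := by
  have hpos : 0 < Nat.fib j := Nat.fib_pos.mpr (by omega)
  have hlt := Nat.fib_lt_fib_succ hj
  rw [a_eq_of_fib_lt_of_le (by omega) (Nat.lt_add_one _) hlt, Nat.add_sub_cancel_left, a_one]

/-- For all `k ≥ 3`, `a (L_k + 1) = F_{k+1} + 1`. -/
theorem a105774_at_lucas_succ (k : ℕ) (hk : 3 ≤ k) :
    a (lucas k + 1) = Nat.fib (k + 1) + 1 := by
  obtain ⟨j, rfl⟩ : ∃ j, k = j + 1 := ⟨k - 1, by omega⟩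
  have hj : 2 ≤ j := by omega
  have hlucas := lucas_succ_eq_fib_add_fib j
  have hgap := Nat.fib_lt_fib_succ hj
  have hpos : 0 < Nat.fib j := Nat.fib_pos.mpr (by omega)
  have hF₃ : Nat.fib (j + 2 + 1) = Nat.fib (j + 1) + Nat.fib (j + 2) := Nat.fib_add_two
  have hF₂ : Nat.fib (j + 2) = Nat.fib j + Nat.fib (j + 1) := Nat.fib_add_two
  rw [a_eq_of_fib_lt_of_le (j := j + 2) (by omega) (by omega) (by omega),
    show lucas (j + 1) + 1 - Nat.fib (j + 2) = Nat.fib j + 1 by omega, a_fib_add_one hj]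
  show Nat.fib (j + 2 + 1) - (Nat.fib (j + 1) - 1) = Nat.fib (j + 2) + 1
  omega
end

section
/- (a) For every integer k ≥ 3, the sequence a restricted to the range F_k ≤ n < F_{k+1} achieves its minimum uniquely at n = F_k; that is, a(n) > a(F_k) for all n with F_k < n < F_{k+1}. (b) For every integer k ≥ 5, a(F_k + 1) = a(F_k + 2), and for all n with F_k ≤ n < F_{k+1} we have a(n) ≤ a(F_k + 1), with equality only if n = F_k + 1 or n = F_k + 2. -/
/-!
Every `n ≥ 2` is uniquely `F (j + 2) + m` with `0 < m ≤ F (j + 1)`, and then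
`a n = F (j + 3) - a m`. Since `a` never exceeds a Fibonacci number lying above its
argument, `0 < a m ≤ F (j + 1)`, so on the block `F k < n ≤ F (k + 1)` the values of `a`
lie in `[F k, F (k + 1))`. The left end `F k` belongs to the previous block and
`a (F k) = F k - a (F (k - 2)) < F k`, giving the minimum. The maximum `F (k + 1) - 1`
comes from `a 1 = a 2 = 1`, while `m ≥ 3` forces `a m ≥ 2`.
-/

open Nat

theorem fib_add_three (j : ℕ) : fib (j + 3) = fib (j + 1) + fib (j + 2) := fib_add_two

theorem a_of_le_one {n : ℕ} (hn : n ≤ 1) : a n = n := by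
  rw [a, dif_pos hn]

theorem a_fib_add {j m : ℕ} (hm₀ : 0 < m) (hm : m ≤ fib (j + 1)) :
    a (fib (j + 2) + m) = fib (j + 3) - a m := by
  have hindex :
      Nat.findGreatest (fun i => fib i < fib (j + 2) + m) (fib (j + 2) + m) = j + 2 := by
    refine findGreatest_eq_iff.2 ⟨by linarith [le_fib_add_one (j + 2)], fun _ => by omega,
      fun i hi _ => not_lt.2 ?_⟩
    have := fib_mono hi
    linarith [fib_add_three j]
  have hn : ¬ fib (j + 2) + m ≤ 1 := by
    have : 0 < fib (j + 2) := fib_pos.2 (by omega)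
    omega
  rw [a, dif_neg hn, hindex, Nat.add_sub_cancel_left]

theorem a_two : a 2 = 1 := by
  rw [show 2 = fib 2 + 1 from rfl, a_fib_add one_pos le_rfl, a_of_le_one le_rfl]
  rfl

theorem exists_eq_fib_add_two_add {n : ℕ} (hn : 2 ≤ n) :
    ∃ j m, 0 < m ∧ m ≤ fib (j + 1) ∧ n = fib (j + 2) + m := by
  induction n, hn using Nat.le_induction with
  | base => exact ⟨0, 1, one_pos, le_rfl, rfl⟩
  | succ n _ ih =>
    obtain ⟨j, m, hm₀, hm, rfl⟩ := ih
    rcases hm.lt_or_eq with hlt | rfl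
    · exact ⟨j, m + 1, succ_pos m, hlt, rfl⟩
    · exact ⟨j + 1, 1, one_pos, fib_pos.2 (succ_pos _), by rw [fib_add_two (n := j + 1)]; ring⟩

theorem a_le_fib {n i : ℕ} (h : n ≤ fib i) : a n ≤ fib i := by
  rcases Nat.lt_or_ge n 2 with hn | hn
  · rwa [a_of_le_one (by omega)]
  obtain ⟨j, m, hm₀, hm, rfl⟩ := exists_eq_fib_add_two_add hn
  have hi : j + 3 ≤ i := by
    by_contra! hi
    have : fib i ≤ fib (j + 2) := fib_mono (by omega)
    omega
  calc a (fib (j + 2) + m) ≤ fib (j + 3) := by rw [a_fib_add hm₀ hm]; exact Nat.sub_le _ _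
    _ ≤ fib i := fib_mono hi

theorem fib_le_a_fib_add {j m : ℕ} (hm₀ : 0 < m) (hm : m ≤ fib (j + 1)) :
    fib (j + 2) ≤ a (fib (j + 2) + m) := by
  have := a_le_fib hm
  rw [a_fib_add hm₀ hm, fib_add_three]
  omega

theorem fib_le_a {k n : ℕ} (h₁ : fib k < n) (h₂ : n ≤ fib (k + 1)) : fib k ≤ a n := by
  obtain _ | _ | j := k
  · exact Nat.zero_le _
  · exact (lt_irrefl 1 (h₁.trans_le h₂)).elim
  · change n ≤ fib (j + 3) at h₂
    obtain ⟨m, rfl⟩ := Nat.exists_eq_add_of_lt h₁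
    exact fib_le_a_fib_add (succ_pos m) (by linarith [fib_add_three j])

theorem a_pos {n : ℕ} (hn : 0 < n) : 0 < a n := by
  rcases Nat.lt_or_ge n 2 with hn' | hn'
  · rwa [a_of_le_one (by omega)]
  obtain ⟨j, m, hm₀, hm, rfl⟩ := exists_eq_fib_add_two_add hn'
  exact (fib_pos.2 (succ_pos _)).trans_le (fib_le_a_fib_add hm₀ hm)

theorem two_le_a {n : ℕ} (hn : 3 ≤ n) : 2 ≤ a n := by
  obtain ⟨j, m, hm₀, hm, rfl⟩ := exists_eq_fib_add_two_add (by omega : 2 ≤ n)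
  obtain _ | j := j
  · replace hm : m ≤ 1 := hm
    change 3 ≤ 1 + m at hn
    omega
  · calc 2 = fib 3 := rfl
      _ ≤ fib (j + 3) := fib_mono (by omega)
      _ ≤ _ := fib_le_a_fib_add hm₀ hm

theorem a_fib_lt_fib {k : ℕ} (hk : 3 ≤ k) : a (fib k) < fib k := by
  obtain ⟨j, rfl⟩ : ∃ j, k = j + 3 := ⟨k - 3, by omega⟩
  have hpos : 0 < fib (j + 1) := fib_pos.2 (succ_pos j)
  calc a (fib (j + 3)) = fib (j + 3) - a (fib (j + 1)) := by
        rw [← a_fib_add hpos le_rfl, fib_add_three, Nat.add_comm (fib (j + 1))]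
    _ < fib (j + 3) := Nat.sub_lt (fib_pos.2 (succ_pos _)) (a_pos hpos)

theorem a_fib_add_one_s14 {k : ℕ} (hk : 2 ≤ k) : a (fib k + 1) = fib (k + 1) - 1 := by
  obtain ⟨j, rfl⟩ : ∃ j, k = j + 2 := ⟨k - 2, by omega⟩
  rw [a_fib_add one_pos (fib_pos.2 (succ_pos j)), a_of_le_one le_rfl]

theorem a_fib_add_two {k : ℕ} (hk : 4 ≤ k) : a (fib k + 2) = fib (k + 1) - 1 := by
  obtain ⟨j, rfl⟩ : ∃ j, k = j + 2 := ⟨k - 2, by omega⟩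
  have h2 : 2 ≤ fib (j + 1) := fib_mono (show 3 ≤ j + 1 by omega)
  rw [a_fib_add two_pos h2, a_two]

theorem a_lt_a_fib_add_one {k n : ℕ} (hk : 4 ≤ k) (h₁ : fib k ≤ n) (h₂ : n < fib (k + 1))
    (hn₁ : n ≠ fib k + 1) (hn₂ : n ≠ fib k + 2) : a n < a (fib k + 1) := by
  rw [a_fib_add_one_s14 (by omega)]
  obtain ⟨j, rfl⟩ : ∃ j, k = j + 2 := ⟨k - 2, by omega⟩
  change n < fib (j + 3) at h₂
  change a n < fib (j + 3) - 1
  have h2 : 2 ≤ fib (j + 1) := fib_mono (show 3 ≤ j + 1 by omega)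
  have hfib := fib_add_three j
  obtain ⟨m, rfl⟩ := Nat.exists_eq_add_of_le h₁
  rcases Nat.eq_zero_or_pos m with rfl | hm₀
  · have := a_fib_lt_fib (show 3 ≤ j + 2 by omega)
    rw [Nat.add_zero]
    omega
  · rw [a_fib_add hm₀ (by omega)]
    have := two_le_a (show 3 ≤ m by omega)
    omega

/-- (a) For `k ≥ 3`, on the range `F k ≤ n < F (k+1)` the sequence `a` achieves
its minimum uniquely at `n = F k`. (b) For `k ≥ 5`, `a (F k + 1) = a (F k + 2)`,
and on that range `a` achieves its maximum only at `F k + 1` and `F k + 2`. -/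
theorem a105774_min_max_on_fib_range (k : ℕ) :
    (3 ≤ k → ∀ n : ℕ, Nat.fib k < n → n < Nat.fib (k + 1) → a (Nat.fib k) < a n) ∧
    (5 ≤ k → a (Nat.fib k + 1) = a (Nat.fib k + 2) ∧
      ∀ n : ℕ, Nat.fib k ≤ n → n < Nat.fib (k + 1) →
        a n ≤ a (Nat.fib k + 1) ∧
        (a n = a (Nat.fib k + 1) → n = Nat.fib k + 1 ∨ n = Nat.fib k + 2)) := by
  refine ⟨fun hk n hn₁ hn₂ => (a_fib_lt_fib hk).trans_le (fib_le_a hn₁ hn₂.le), fun hk => ?_⟩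
  have hF₂ : a (fib k + 1) = a (fib k + 2) := by
    rw [a_fib_add_one_s14 (by omega), a_fib_add_two (by omega)]
  refine ⟨hF₂, fun n hn₁ hn₂ => ?_⟩
  by_cases hn : n = fib k + 1 ∨ n = fib k + 2
  · refine ⟨?_, fun _ => hn⟩
    rcases hn with rfl | rfl
    · exact le_rfl
    · exact hF₂.ge
  · obtain ⟨hne₁, hne₂⟩ := not_or.1 hn
    have hlt := a_lt_a_fib_add_one (by omega) hn₁ hn₂ hne₁ hne₂
    exact ⟨hlt.le, fun h => absurd h hlt.ne⟩
end
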